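/- Let 1 < p < ∞ and let u ≥ 0 be a continuous bounded weak solution of Δ_p u = ∂_z β(u) in C_L with the selection χ = 1_{u>0}, and assume z ↦ u(x,z) is nondecreasing for each x. Then u is a weak subsolution of Δ_p u − a ∂_z u ≥ 0 in C_L: for every nonnegative ζ ∈ C_c^∞(C_L) one has ∫_{C_L} ‖∇u‖^{p−2} ∇u · ∇ζ − a ∫_{C_L} u ∂_z ζ ≤ 0. -/

import Mathlib

open MeasureTheory Metric Set Filter
open scoped RealInnerProductSpace Topology

noncomputable section

/-- Smooth test functions compactly supported in `C`. -/
def IsTest {N : ℕ} (C : Set (EuclideanSpace ℝ (Fin N))) (φ : EuclideanSpace ℝ (Fin N) → ℝ) : Prop :=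
  ContDiff ℝ (⊤ : ℕ∞) φ ∧ HasCompactSupport φ ∧ tsupport φ ⊆ C

/-- `V` is the weak gradient of `u` on `C`. -/
def HasWeakGradientOn {N : ℕ} (C : Set (EuclideanSpace ℝ (Fin N)))
    (u : EuclideanSpace ℝ (Fin N) → ℝ)
    (V : EuclideanSpace ℝ (Fin N) → EuclideanSpace ℝ (Fin N)) : Prop :=
  ∀ φ : EuclideanSpace ℝ (Fin N) → ℝ, IsTest C φ → ∀ i : Fin N,
    ∫ X in C, u X * fderiv ℝ φ X (EuclideanSpace.single i 1)
      = - ∫ X in C, V X i * φ X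

/-- Admissible selection `χ ∈ H(u)`: `χ ∈ [0,1]`, `χ = 1` a.e. on `{u > 0}`,
`χ = 0` a.e. on `{u < 0}`. -/
def IsSelection {N : ℕ} (C : Set (EuclideanSpace ℝ (Fin N)))
    (u χ : EuclideanSpace ℝ (Fin N) → ℝ) : Prop :=
  Measurable χ ∧ (∀ X, χ X ∈ Icc (0:ℝ) 1) ∧
    (∀ᵐ X ∂(volume.restrict C), 0 < u X → χ X = 1) ∧
    (∀ᵐ X ∂(volume.restrict C), u X < 0 → χ X = 0)

/-- Weak formulation of `Δ_p u = ∂_z β(u)` on `C`, `β(u) = a u + ℓ χ`, where `V` plays the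
role of `∇u` and `zdir` is the unit vector of the `z`-direction. -/
def IsWeakSolution {N : ℕ} (p a ℓ : ℝ) (C : Set (EuclideanSpace ℝ (Fin N)))
    (zdir : EuclideanSpace ℝ (Fin N)) (u : EuclideanSpace ℝ (Fin N) → ℝ)
    (V : EuclideanSpace ℝ (Fin N) → EuclideanSpace ℝ (Fin N))
    (χ : EuclideanSpace ℝ (Fin N) → ℝ) : Prop :=
  ∀ φ : EuclideanSpace ℝ (Fin N) → ℝ, IsTest C φ →
    ∫ X in C, ‖V X‖ ^ (p - 2) * ⟪V X, gradient φ X⟫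
      = ∫ X in C, (a * u X + ℓ * χ X) * fderiv ℝ φ X zdir

/-- A nonnegative solution of `Δ_p u = ∂_z β(u)` (with the selection
`χ = 1_{u>0}`) which is nondecreasing in the `z`-direction is a weak subsolution of
`Δ_p u − a ∂_z u ≥ 0`. -/
theorem weak_subsolution_of_monotone
    (N : ℕ) (hN : 2 ≤ N)
    (p a ℓ L M : ℝ) (hp : 1 < p) (ha : 0 < a) (hℓ : 0 < ℓ) (hL : 0 < L) (hM : 0 < M)
    (Ω : Set (EuclideanSpace ℝ (Fin (N - 1)))) (hΩopen : IsOpen Ω)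
    (hΩbd : Bornology.IsBounded Ω) (hΩne : Ω.Nonempty) (hΩconn : IsConnected Ω)
    (C : Set (EuclideanSpace ℝ (Fin N)))
    (hC : C = {X : EuclideanSpace ℝ (Fin N) |
        WithLp.toLp 2 (fun j : Fin (N - 1) => X (Fin.castLE (by omega) j)) ∈ Ω ∧
        X ⟨N - 1, by omega⟩ ∈ Set.Ioo 0 L})
    (u : EuclideanSpace ℝ (Fin N) → ℝ)
    (V : EuclideanSpace ℝ (Fin N) → EuclideanSpace ℝ (Fin N))
    (hu : ContinuousOn u C) (hupos : ∀ X ∈ C, 0 ≤ u X) (hbd : ∀ X ∈ C, u X ≤ M)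
    (hVLp : MemLp V (ENNReal.ofReal p) (volume.restrict C))
    (hgrad : HasWeakGradientOn C u V)
    (hsol : IsWeakSolution p a ℓ C (EuclideanSpace.single ⟨N - 1, by omega⟩ 1) u V
      (fun X => if 0 < u X then 1 else 0))
    (hmono : ∀ (X : EuclideanSpace ℝ (Fin N)) (s t : ℝ), s ≤ t →
      WithLp.toLp 2 (Function.update X ⟨N - 1, by omega⟩ s) ∈ C →
      WithLp.toLp 2 (Function.update X ⟨N - 1, by omega⟩ t) ∈ C →
      u (WithLp.toLp 2 (Function.update X ⟨N - 1, by omega⟩ s)) ≤ u (WithLp.toLp 2 (Function.update X ⟨N - 1, by omega⟩ t))) :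
    ∀ ζ : EuclideanSpace ℝ (Fin N) → ℝ, IsTest C ζ → (∀ X, 0 ≤ ζ X) →
      (∫ X in C, ‖V X‖ ^ (p - 2) * ⟪V X, gradient ζ X⟫)
        - a * ∫ X in C, u X * fderiv ℝ ζ X (EuclideanSpace.single ⟨N - 1, by omega⟩ 1)
        ≤ 0 := by
  intro ζ hζ hζ0
  obtain ⟨hζsm, hζcs, hζsupp⟩ := hζ
  have hNpos : N - 1 < N := by omega
  set i : Fin N := ⟨N - 1, hNpos⟩ with hidef
  set e : EuclideanSpace ℝ (Fin N) := EuclideanSpace.single i 1 with hedef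
  -- basic facts about ζ and its derivative in direction e
  set d : EuclideanSpace ℝ (Fin N) → ℝ := fun X => fderiv ℝ ζ X e with hddef
  have hdcont : Continuous d := by
    have h1 : Continuous (fderiv ℝ ζ) := hζsm.continuous_fderiv (by simp)
    fun_prop
  have hdzero : ∀ X, X ∉ tsupport ζ → d X = 0 := by
    intro X hX
    have : fderiv ℝ ζ X = 0 := by
      by_contra h
      exact hX (support_fderiv_subset ℝ (by simpa [Function.mem_support] using h))
    simp [hddef, this]
  have hdcs : HasCompactSupport d := by
    have : HasCompactSupport (fderiv ℝ ζ) := hζcs.fderiv ℝ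
    exact this.comp_left (g := fun L : (EuclideanSpace ℝ (Fin N)) →L[ℝ] ℝ => L e) rfl
  obtain ⟨Kd, hKd⟩ := hdcs.exists_bound_of_continuous hdcont
  obtain ⟨J, hJ⟩ := hζcs.exists_bound_of_continuous hζsm.continuous
  obtain ⟨K, hK⟩ := hζsm.lipschitzWith_of_hasCompactSupport hζcs (by simp)
  have hnorme : ‖e‖ = 1 := by simp [hedef, EuclideanSpace.norm_single]
  -- C is open
  have hCopen : IsOpen C := by
    rw [hC]
    have h1 : Continuous (fun X : EuclideanSpace ℝ (Fin N) =>
        WithLp.toLp 2 (fun j : Fin (N-1) => X (Fin.castLE (by omega) j))) :=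
      (PiLp.continuous_toLp 2 _).comp (continuous_pi fun j => (EuclideanSpace.proj _).continuous)
    have h2 : Continuous (fun X : EuclideanSpace ℝ (Fin N) => X i) :=
      (EuclideanSpace.proj i).continuous
    exact (hΩopen.preimage h1).inter (isOpen_Ioo.preimage h2)
  have hCmeas : MeasurableSet C := hCopen.measurableSet
  -- the open set where u > 0, and the upward closure S
  set U : Set (EuclideanSpace ℝ (Fin N)) := C ∩ u ⁻¹' Ioi 0 with hUdef
  have hUopen : IsOpen U := hu.isOpen_inter_preimage hCopen isOpen_Ioi
  set S : Set (EuclideanSpace ℝ (Fin N)) :=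
    {X | ∃ s, s ≤ X i ∧ WithLp.toLp 2 (Function.update X i s) ∈ U} with hSdef
  have hupd_cont : ∀ X : EuclideanSpace ℝ (Fin N),
      Continuous (fun t : ℝ => WithLp.toLp 2 (Function.update X i t)) := by
    intro X; fun_prop
  have hupd_cont2 : ∀ q : ℝ,
      Continuous (fun X : EuclideanSpace ℝ (Fin N) => WithLp.toLp 2 (Function.update X i q)) := by
    intro q; fun_prop
  have hSmeas : MeasurableSet S := by
    have hSeq : S = ⋃ q : ℚ,
        ((fun X : EuclideanSpace ℝ (Fin N) => WithLp.toLp 2 (Function.update X i (q:ℝ))) ⁻¹' U ∩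
          {X : EuclideanSpace ℝ (Fin N) | (q:ℝ) ≤ X i}) := by
      ext X
      constructor
      · rintro ⟨s, hs, hsU⟩
        have hTopen : IsOpen {t : ℝ | WithLp.toLp 2 (Function.update X i t) ∈ U} :=
          hUopen.preimage (hupd_cont X)
        obtain ⟨ε, εpos, hball⟩ := Metric.isOpen_iff.1 hTopen s hsU
        obtain ⟨q, hq1, hq2⟩ := exists_rat_btwn (show s - ε < s by linarith)
        refine mem_iUnion.2 ⟨q, ⟨hball ?_, le_trans hq2.le hs⟩⟩
        simp only [mem_ball, Real.dist_eq, abs_lt]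
        constructor <;> linarith
      · intro h
        obtain ⟨q, hq⟩ := mem_iUnion.1 h
        exact ⟨q, hq.2, hq.1⟩
    rw [hSeq]
    refine MeasurableSet.iUnion fun q => MeasurableSet.inter ?_ ?_
    · exact hUopen.measurableSet.preimage (hupd_cont2 (q:ℝ)).measurable
    · exact measurableSet_le measurable_const
        ((EuclideanSpace.proj i).continuous.measurable)
  set w : EuclideanSpace ℝ (Fin N) → ℝ := S.indicator (fun _ => 1) with hwdef
  have hwmeas : Measurable w := measurable_const.indicator hSmeas
  have hw01 : ∀ X, 0 ≤ w X ∧ w X ≤ 1 := by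
    intro X
    by_cases h : X ∈ S <;> simp [hwdef, indicator_apply, h]
  -- key algebraic facts about coordinates
  have hsub_apply : ∀ (X : EuclideanSpace ℝ (Fin N)) (h : ℝ),
      (X - h • e : EuclideanSpace ℝ (Fin N)) i = X i - h := by
    intro X h
    simp [hedef, PiLp.sub_apply, PiLp.smul_apply, EuclideanSpace.single_apply]
  have hupd_sub : ∀ (X : EuclideanSpace ℝ (Fin N)) (h s : ℝ),
      Function.update (X - h • e) i s = Function.update X i s := by
    intro X h s
    funext j
    rcases eq_or_ne j i with rfl | hj
    · simp
    · rw [Function.update_of_ne hj, Function.update_of_ne hj]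
      show (X - h • e : EuclideanSpace ℝ (Fin N)) j = X j
      simp [hedef, PiLp.sub_apply, PiLp.smul_apply, EuclideanSpace.single_apply, hj]
  -- monotonicity of w along e
  have hSshift : ∀ (h : ℝ), 0 ≤ h → ∀ X, X - h • e ∈ S → X ∈ S := by
    rintro h hh X ⟨s, hs, hsU⟩
    refine ⟨s, ?_, ?_⟩
    · rw [hsub_apply] at hs; linarith
    · rwa [hupd_sub] at hsU
  have hwshift : ∀ (h : ℝ), 0 ≤ h → ∀ X, w (X - h • e) ≤ w X := by
    intro h hh X
    by_cases hXS : X - h • e ∈ S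
    · have hX : X ∈ S := hSshift h hh X hXS
      rw [hwdef, indicator_of_mem hXS, indicator_of_mem hX]
    · rw [hwdef, indicator_of_notMem hXS]
      exact Set.indicator_nonneg (fun _ _ => zero_le_one) X
  -- w agrees with χ on C
  have hwχ : ∀ X ∈ C, w X = (if 0 < u X then (1:ℝ) else 0) := by
    intro X hXC
    have hXX : WithLp.toLp 2 (Function.update X i (X i)) = X := by simp [Function.update_eq_self]
    by_cases hx : 0 < u X
    · have hXS : X ∈ S := ⟨X i, le_refl _, by rw [hXX]; exact ⟨hXC, hx⟩⟩
      simp [hwdef, indicator_apply, hXS, hx]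
    · have hXS : X ∉ S := by
        rintro ⟨s, hs, hsU⟩
        obtain ⟨hsC, hsu⟩ := hsU
        have := hmono X s (X i) hs hsC (by rwa [hXX])
        rw [hXX] at this
        have : (0:ℝ) < u X := lt_of_lt_of_le hsu this
        exact hx this
      simp [hwdef, indicator_apply, hXS, hx]
  -- the compact carrier D
  set D : Set (EuclideanSpace ℝ (Fin N)) := cthickening 1 (tsupport ζ) with hDdef
  have hDcp : IsCompact D := hζcs.cthickening
  have hDmeas : MeasurableSet D := hDcp.measurableSet
  have hsubD : tsupport ζ ⊆ D := self_subset_cthickening _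
  have hmemD : ∀ (c : ℝ), |c| ≤ 1 → ∀ X : EuclideanSpace ℝ (Fin N),
      X + c • e ∈ tsupport ζ → X ∈ D := by
    intro c hc X hX
    refine mem_cthickening_of_dist_le X (X + c • e) 1 _ hX ?_
    have : dist X (X + c • e) = ‖c • e‖ := by
      rw [dist_eq_norm']; congr 1; abel
    rw [this, norm_smul, hnorme]
    simpa using hc
  have hζzero : ∀ X : EuclideanSpace ℝ (Fin N), X ∉ D → ζ X = 0 := by
    intro X hX
    exact image_eq_zero_of_notMem_tsupport (fun h => hX (hsubD h))
  have hζzero' : ∀ (c : ℝ), |c| ≤ 1 → ∀ X : EuclideanSpace ℝ (Fin N), X ∉ D →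
      ζ (X + c • e) = 0 := by
    intro c hc X hX
    by_contra h
    exact hX (hmemD c hc X (subset_tsupport ζ h))
  -- the difference quotients
  set c : ℕ → ℝ := fun n => ((n:ℝ)+1)⁻¹ with hcdef
  have hc0 : ∀ n, 0 < c n := by
    intro n
    have : (0:ℝ) < (n:ℝ) + 1 := by positivity
    exact inv_pos.2 this
  have hc1 : ∀ n, c n ≤ 1 := by
    intro n
    have h1 : c n = 1/((n:ℝ)+1) := by rw [hcdef, one_div]
    rw [h1, div_le_one (by positivity)]
    linarith [Nat.cast_nonneg (α := ℝ) n]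
  set F : ℕ → EuclideanSpace ℝ (Fin N) → ℝ :=
    fun n X => w X * ((c n)⁻¹ * (ζ (X + c n • e) - ζ X)) with hFdef
  set g : EuclideanSpace ℝ (Fin N) → ℝ := D.indicator (fun _ => (K:ℝ)) with hgdef
  have hg_int : Integrable g := by
    rw [hgdef, integrable_indicator_iff hDmeas]
    exact integrableOn_const hDcp.measure_lt_top.ne
  have hζshift_cont : ∀ n, Continuous (fun X : EuclideanSpace ℝ (Fin N) => ζ (X + c n • e)) :=
    fun n => hζsm.continuous.comp (continuous_id.add continuous_const)
  have hF_meas : ∀ n, AEStronglyMeasurable (F n) volume := by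
    intro n
    exact (hwmeas.aestronglyMeasurable.mul
      (((continuous_const.mul ((hζshift_cont n).sub hζsm.continuous))).aestronglyMeasurable))
  have hF_bound : ∀ n, ∀ᵐ X ∂(volume : Measure (EuclideanSpace ℝ (Fin N))),
      ‖F n X‖ ≤ g X := by
    intro n
    refine Filter.Eventually.of_forall fun X => ?_
    by_cases hXD : X ∈ D
    · have hgX : g X = K := by simp [hgdef, indicator_apply, hXD]
      rw [hgX]
      have hdist : |ζ (X + c n • e) - ζ X| ≤ K * c n := by
        have := hK.dist_le_mul (X + c n • e) X
        rw [Real.dist_eq] at this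
        have hd : dist (X + c n • e) X = c n := by
          rw [dist_eq_norm]
          have : (X + c n • e) - X = c n • e := by abel
          rw [this, norm_smul, hnorme, mul_one, Real.norm_eq_abs,
            abs_of_pos (hc0 n)]
        rw [hd] at this
        exact this
      have hw1 : |w X| ≤ 1 := by rw [abs_of_nonneg (hw01 X).1]; exact (hw01 X).2
      calc ‖F n X‖ = |w X| * ((c n)⁻¹ * |ζ (X + c n • e) - ζ X|) := by
            rw [hFdef, Real.norm_eq_abs, abs_mul, abs_mul,
              abs_of_pos (inv_pos.2 (hc0 n))]
        _ ≤ 1 * ((c n)⁻¹ * (K * c n)) := by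
            refine mul_le_mul hw1 ?_ (by positivity) zero_le_one
            exact mul_le_mul_of_nonneg_left hdist (inv_pos.2 (hc0 n)).le
        _ = K := by rw [one_mul, mul_comm, mul_assoc, mul_inv_cancel₀ (hc0 n).ne', mul_one]
    · have h1 : ζ X = 0 := hζzero X hXD
      have h2 : ζ (X + c n • e) = 0 :=
        hζzero' (c n) (by rw [abs_of_pos (hc0 n)]; exact hc1 n) X hXD
      have : F n X = 0 := by rw [hFdef]; simp [h1, h2]
      rw [this]
      simp [hgdef, indicator_apply, hXD]
  have hF_tendsto : ∀ᵐ X ∂(volume : Measure (EuclideanSpace ℝ (Fin N))),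
      Tendsto (fun n => F n X) atTop (nhds (w X * d X)) := by
    refine Filter.Eventually.of_forall fun X => ?_
    have hld : HasLineDerivAt ℝ ζ (d X) X e :=
      ((hζsm.differentiable (by simp) X).hasFDerivAt).hasLineDerivAt e
    have hslope := hld.tendsto_slope_zero
    have hcto : Tendsto c atTop (nhdsWithin 0 {0}ᶜ) := by
      apply tendsto_nhdsWithin_of_tendsto_nhds_of_eventually_within
      · exact Tendsto.congr (fun n => by simp [hcdef]) (tendsto_one_div_add_atTop_nhds_zero_nat : Tendsto (fun n : ℕ => 1 / ((n:ℝ) + 1)) atTop (𝓝 0))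
      · exact Filter.Eventually.of_forall fun n => (hc0 n).ne'
    have := hslope.comp hcto
    have h2 : Tendsto (fun n => (c n)⁻¹ * (ζ (X + c n • e) - ζ X)) atTop (nhds (d X)) := by
      exact this
    exact h2.const_mul (w X)
  have hDCT := tendsto_integral_of_dominated_convergence g hF_meas hg_int hF_bound hF_tendsto
  -- each integral is nonpositive
  have hg2_int : Integrable (D.indicator (fun _ => (J:ℝ))) := by
    rw [integrable_indicator_iff hDmeas]
    exact integrableOn_const hDcp.measure_lt_top.ne
  have hwζ_int : Integrable (fun X => w X * ζ X) := by
    refine Integrable.mono' hg2_int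
      (hwmeas.aestronglyMeasurable.mul hζsm.continuous.aestronglyMeasurable)
      (Filter.Eventually.of_forall fun X => ?_)
    by_cases hXD : X ∈ D
    · rw [indicator_of_mem hXD, Real.norm_eq_abs, abs_mul]
      have hw1 : |w X| ≤ 1 := by rw [abs_of_nonneg (hw01 X).1]; exact (hw01 X).2
      have h2 : |ζ X| ≤ J := (Real.norm_eq_abs (ζ X)) ▸ hJ X
      calc |w X| * |ζ X| ≤ 1 * J := mul_le_mul hw1 h2 (abs_nonneg _) zero_le_one
        _ = J := one_mul J
    · rw [indicator_of_notMem hXD]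
      simp [hζzero X hXD]
  have hwζs_int : ∀ n, Integrable (fun X => w X * ζ (X + c n • e)) := by
    intro n
    refine Integrable.mono' hg2_int
      (hwmeas.aestronglyMeasurable.mul (hζshift_cont n).aestronglyMeasurable)
      (Filter.Eventually.of_forall fun X => ?_)
    by_cases hXD : X ∈ D
    · rw [indicator_of_mem hXD, Real.norm_eq_abs, abs_mul]
      have hw1 : |w X| ≤ 1 := by rw [abs_of_nonneg (hw01 X).1]; exact (hw01 X).2
      have h2 : |ζ (X + c n • e)| ≤ J := (Real.norm_eq_abs _) ▸ hJ _
      calc |w X| * |ζ (X + c n • e)| ≤ 1 * J :=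
            mul_le_mul hw1 h2 (abs_nonneg _) zero_le_one
        _ = J := one_mul J
    · rw [indicator_of_notMem hXD]
      simp [hζzero' (c n) (by rw [abs_of_pos (hc0 n)]; exact hc1 n) X hXD]
  have hwsζ_int : ∀ n, Integrable (fun X => w (X - c n • e) * ζ X) := by
    intro n
    have hwm : Measurable (fun X : EuclideanSpace ℝ (Fin N) => w (X - c n • e)) :=
      hwmeas.comp (measurable_id.sub measurable_const)
    refine Integrable.mono' hg2_int
      (hwm.aestronglyMeasurable.mul hζsm.continuous.aestronglyMeasurable)
      (Filter.Eventually.of_forall fun X => ?_)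
    by_cases hXD : X ∈ D
    · rw [indicator_of_mem hXD, Real.norm_eq_abs, abs_mul]
      have hw1 : |w (X - c n • e)| ≤ 1 := by
        rw [abs_of_nonneg (hw01 _).1]; exact (hw01 _).2
      have h2 : |ζ X| ≤ J := (Real.norm_eq_abs _) ▸ hJ _
      calc |w (X - c n • e)| * |ζ X| ≤ 1 * J :=
            mul_le_mul hw1 h2 (abs_nonneg _) zero_le_one
        _ = J := one_mul J
    · rw [indicator_of_notMem hXD]
      simp [hζzero X hXD]
  have hFn_nonpos : ∀ n, (∫ X, F n X) ≤ 0 := by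
    intro n
    have htrans : (∫ X, w X * ζ (X + c n • e)) = ∫ X, w (X - c n • e) * ζ X := by
      have h := integral_add_right_eq_self (μ := (volume : Measure (EuclideanSpace ℝ (Fin N))))
        (fun X : EuclideanSpace ℝ (Fin N) => w (X - c n • e) * ζ X) (c n • e)
      calc (∫ X, w X * ζ (X + c n • e))
          = ∫ X, w ((X + c n • e) - c n • e) * ζ (X + c n • e) := by
            congr 1; funext X; congr 2; abel
        _ = ∫ X, w (X - c n • e) * ζ X := h
    have hFneq : (∫ X, F n X) =
        (c n)⁻¹ * ((∫ X, w X * ζ (X + c n • e)) - ∫ X, w X * ζ X) := by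
      rw [← integral_sub (hwζs_int n) hwζ_int, ← integral_const_mul]
      congr 1; funext X; rw [hFdef]; ring
    rw [hFneq, htrans]
    have hle : (∫ X, w (X - c n • e) * ζ X) ≤ ∫ X, w X * ζ X := by
      refine integral_mono (hwsζ_int n) hwζ_int fun X => ?_
      exact mul_le_mul_of_nonneg_right (hwshift (c n) (hc0 n).le X) (hζ0 X)
    have : ((∫ X, w (X - c n • e) * ζ X) - ∫ X, w X * ζ X) ≤ 0 := by linarith
    exact mul_nonpos_of_nonneg_of_nonpos (inv_pos.2 (hc0 n)).le this
  have hlim : (∫ X, w X * d X) ≤ 0 :=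
    le_of_tendsto hDCT (Filter.Eventually.of_forall hFn_nonpos)
  -- identify ∫_C χ d with ∫ w d
  have hχd : (∫ X in C, (if 0 < u X then (1:ℝ) else 0) * d X) = ∫ X, w X * d X := by
    rw [← integral_indicator hCmeas]
    congr 1
    funext X
    by_cases hXC : X ∈ C
    · rw [indicator_of_mem hXC, hwχ X hXC]
    · rw [indicator_of_notMem hXC]
      have : d X = 0 := hdzero X (fun h => hXC (hζsupp h))
      rw [this, mul_zero]
  -- integrability over C of the two pieces
  have htsmeas : MeasurableSet (tsupport ζ) := (isClosed_tsupport ζ).measurableSet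
  have htsfin : volume (tsupport ζ) < ⊤ := hζcs.measure_lt_top
  have hbnd_int : ∀ b : ℝ, Integrable ((tsupport ζ).indicator (fun _ => b))
      (volume.restrict C) := by
    intro b
    exact (((integrable_indicator_iff htsmeas).2
      (integrableOn_const htsfin.ne))).integrableOn
  have hud_int : IntegrableOn (fun X => u X * d X) C := by
    refine Integrable.mono' (hbnd_int (M * Kd))
      ((hu.aestronglyMeasurable hCmeas).mul hdcont.aestronglyMeasurable.restrict)
      ?_
    filter_upwards [ae_restrict_mem hCmeas] with X hXC
    by_cases hXs : X ∈ tsupport ζ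
    · rw [indicator_of_mem hXs, Real.norm_eq_abs, abs_mul]
      have h1 : |u X| ≤ M := by
        rw [abs_of_nonneg (hupos X hXC)]; exact hbd X hXC
      have h2 : |d X| ≤ Kd := (Real.norm_eq_abs _) ▸ hKd X
      exact mul_le_mul h1 h2 (abs_nonneg _) hM.le
    · rw [indicator_of_notMem hXs]
      simp [hdzero X hXs]
  have hχd_meas : AEStronglyMeasurable (fun X => (if 0 < u X then (1:ℝ) else 0) * d X)
      (volume.restrict C) := by
    have h1 : AEStronglyMeasurable (fun X => U.indicator (fun _ => (1:ℝ)) X * d X)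
        (volume.restrict C) :=
      ((measurable_const.indicator hUopen.measurableSet).aestronglyMeasurable.mul
        hdcont.aestronglyMeasurable).restrict
    refine h1.congr ?_
    filter_upwards [ae_restrict_mem hCmeas] with X hXC
    by_cases hx : 0 < u X
    · have : X ∈ U := ⟨hXC, hx⟩
      simp [indicator_apply, this, hx]
    · have : X ∉ U := fun h => hx h.2
      simp [indicator_apply, this, hx]
  have hχd_int : IntegrableOn (fun X => (if 0 < u X then (1:ℝ) else 0) * d X) C := by
    refine Integrable.mono' (hbnd_int Kd) hχd_meas ?_
    filter_upwards [ae_restrict_mem hCmeas] with X hXC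
    by_cases hXs : X ∈ tsupport ζ
    · rw [indicator_of_mem hXs, Real.norm_eq_abs, abs_mul]
      have h2 : |d X| ≤ Kd := (Real.norm_eq_abs _) ▸ hKd X
      have h1 : |if 0 < u X then (1:ℝ) else 0| ≤ 1 := by
        split <;> simp
      calc |if 0 < u X then (1:ℝ) else 0| * |d X| ≤ 1 * Kd :=
            mul_le_mul h1 h2 (abs_nonneg _) zero_le_one
        _ = Kd := one_mul Kd
    · rw [indicator_of_notMem hXs]
      simp [hdzero X hXs]
  -- split the right-hand side of the weak formulation
  have hsplit : (∫ X in C, (a * u X + ℓ * (if 0 < u X then (1:ℝ) else 0)) * d X) =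
      a * (∫ X in C, u X * d X) +
        ℓ * ∫ X in C, (if 0 < u X then (1:ℝ) else 0) * d X := by
    have heq : ∀ X, (a * u X + ℓ * (if 0 < u X then (1:ℝ) else 0)) * d X =
        a * (u X * d X) + ℓ * ((if 0 < u X then (1:ℝ) else 0) * d X) := by
      intro X; ring
    simp_rw [heq]
    rw [integral_add (hud_int.const_mul a) (hχd_int.const_mul ℓ),
      integral_const_mul, integral_const_mul]
  have hsoleq := hsol ζ ⟨hζsm, hζcs, hζsupp⟩
  rw [hsoleq]
  have hfinal : (∫ X in C, (if 0 < u X then (1:ℝ) else 0) * d X) ≤ 0 := hχd ▸ hlim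
  have hℓfinal : ℓ * (∫ X in C, (if 0 < u X then (1:ℝ) else 0) * d X) ≤ 0 :=
    mul_nonpos_of_nonneg_of_nonpos hℓ.le hfinal
  calc (∫ X in C, (a * u X + ℓ * (if 0 < u X then (1:ℝ) else 0)) * d X) -
        a * ∫ X in C, u X * d X
      = ℓ * ∫ X in C, (if 0 < u X then (1:ℝ) else 0) * d X := by
        rw [hsplit]; ring
    _ ≤ 0 := hℓfinal
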